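/- arXiv:1810.00902 — 3 statements merged into one kernel-verified Lean document; each statement's English description precedes it below -/
import Mathlib

section
/- Let n, p, q, k ∈ ℕ with k ≥ 1, let C ∈ ℝ^{p×n}, and let (G_j)_{j∈ℕ} be a sequence of matrices in ℝ^{n×n}. Assume that for every z ∈ ℝ^n with z ≠ 0, the cardinality of supp(C G_0 z) ∪ … ∪ supp(C G_{k−1} z) is strictly greater than 2q. Let x_0 ∈ ℝ^n, let K ⊆ {1,…,p} with |K| ≤ q, let e[0],…,e[k−1] ∈ ℝ^p satisfy supp(e[j]) ⊆ K for all j, and set y[j] = C G_j x_0 + e[j]. Then for every pair (x̂, K̂) with x̂ ∈ ℝ^n and K̂ ⊆ {1,…,p} that is optimal for the problem of minimizing |K̂| subject to supp(y[j] − C G_j x̂) ⊆ K̂ for all j ∈ {0,…,k−1}, one has x̂ = x_0. -/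
open Classical in
/-- The support of a vector `v ∈ ℝ^p`: the set of indices of nonzero components. -/
noncomputable def supp {p : ℕ} (v : Fin p → ℝ) : Finset (Fin p) :=
  Finset.univ.filter fun i => v i ≠ 0

/-- Suppose that for every nonzero `z`, the union
`supp(C G_0 z) ∪ … ∪ supp(C G_{k−1} z)` has more than `2q` elements. If the outputs are
`y[j] = C G_j x₀ + e[j]` with the errors supported on a set `K` of at most `q` channels,
then any pair `(xhat, Khat)` optimal for the ℓ₀ problem — minimizing `|Khat|` subject to
`supp(y[j] − C G_j xhat) ⊆ Khat` for all `j < k` — satisfies `xhat = x₀`. -/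
theorem l0_estimator_optimal
    (n p q k : ℕ) (hk : 1 ≤ k)
    (C : Matrix (Fin p) (Fin n) ℝ)
    (G : ℕ → Matrix (Fin n) (Fin n) ℝ)
    (hcond : ∀ z : Fin n → ℝ, z ≠ 0 →
      2 * q < ((Finset.range k).biUnion fun j => supp ((C * G j).mulVec z)).card)
    (x₀ : Fin n → ℝ)
    (K : Finset (Fin p)) (hK : K.card ≤ q)
    (e : Fin k → (Fin p → ℝ)) (he : ∀ j : Fin k, supp (e j) ⊆ K)
    (y : Fin k → (Fin p → ℝ))
    (hy : ∀ j : Fin k, y j = (C * G (j : ℕ)).mulVec x₀ + e j)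
    (xhat : Fin n → ℝ) (Khat : Finset (Fin p))
    (hfeas : ∀ j : Fin k, supp (y j - (C * G (j : ℕ)).mulVec xhat) ⊆ Khat)
    (hopt : ∀ (x' : Fin n → ℝ) (K' : Finset (Fin p)),
      (∀ j : Fin k, supp (y j - (C * G (j : ℕ)).mulVec x') ⊆ K') → Khat.card ≤ K'.card) :
    xhat = x₀ := by
  by_contra hne
  have hz : xhat - x₀ ≠ 0 := sub_ne_zero.mpr hne
  -- Khat.card ≤ q since (x₀, K) is feasible
  have hfeas0 : ∀ j : Fin k, supp (y j - (C * G (j : ℕ)).mulVec x₀) ⊆ K := by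
    intro j
    have : y j - (C * G (j : ℕ)).mulVec x₀ = e j := by
      rw [hy j]; ring
    rw [this]; exact he j
  have hKhat : Khat.card ≤ q := le_trans (hopt x₀ K hfeas0) hK
  -- supp (C G_j (xhat - x₀)) ⊆ K ∪ Khat for all j < k
  have hsub : ∀ j ∈ Finset.range k,
      supp ((C * G j).mulVec (xhat - x₀)) ⊆ K ∪ Khat := by
    intro j hj
    rw [Finset.mem_range] at hj
    intro i hi
    simp only [supp, Finset.mem_filter, Finset.mem_univ, true_and] at hi
    have hval : (C * G j).mulVec (xhat - x₀) i
        = e ⟨j, hj⟩ i - (y ⟨j, hj⟩ - (C * G j).mulVec xhat) i := by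
      rw [Matrix.mulVec_sub]
      simp [hy ⟨j, hj⟩]
      ring
    rw [Finset.mem_union]
    by_contra hcon
    push_neg at hcon
    have h1 : e ⟨j, hj⟩ i = 0 := by
      by_contra h
      exact hcon.1 (he ⟨j, hj⟩ (by simp [supp, h]))
    have h2 : (y ⟨j, hj⟩ - (C * G j).mulVec xhat) i = 0 := by
      by_contra h
      exact hcon.2 (hfeas ⟨j, hj⟩ (by simpa [supp, Pi.sub_apply] using h))
    rw [hval, h1, h2] at hi
    simp at hi
  have hbig : ((Finset.range k).biUnion fun j => supp ((C * G j).mulVec (xhat - x₀)))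
      ⊆ K ∪ Khat := Finset.biUnion_subset.mpr hsub
  have := hcond (xhat - x₀) hz
  have hcard : ((Finset.range k).biUnion fun j => supp ((C * G j).mulVec (xhat - x₀))).card
      ≤ (K ∪ Khat).card := Finset.card_le_card hbig
  have : 2 * q < (K ∪ Khat).card := lt_of_lt_of_le this hcard
  have : (K ∪ Khat).card ≤ 2 * q := by
    calc (K ∪ Khat).card ≤ K.card + Khat.card := Finset.card_union_le _ _
    _ ≤ q + q := Nat.add_le_add hK hKhat
    _ = 2 * q := (two_mul q).symm
  omega
end

section
/- Let n, p, q, k ∈ ℕ with k ≥ 1, let r ∈ ℝ with r ≥ 1, let C ∈ ℝ^{p×n}, and let (G_j)_{j∈ℕ} be a sequence of matrices in ℝ^{n×n}. Define Φ_k : ℝ^n → ℝ^{p×k} by letting the j-th column of Φ_k x be C G_j x for j ∈ {0,…,k−1}. Then the following are equivalent: (1) the ℓ₁/ℓ_r central estimator correctly estimates the initial state in k time steps under artifacts in q channels; (2) for every K ⊆ {1,…,p} with |K| = q and every z ∈ ℝ^n with z ≠ 0, setting M = Φ_k z, one has Σ_{i∈K} ‖M_i‖_{ℓ_r} < Σ_{i∈K^c}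 ‖M_i‖_{ℓ_r}, where M_i ∈ ℝ^k denotes the i-th row of M. -/
/-- The `ℓ_r` norm of a vector `w ∈ ℝ^k`: `(Σ_j |w_j|^r)^(1/r)`. -/
noncomputable def lrNorm {k : ℕ} (r : ℝ) (w : Fin k → ℝ) : ℝ :=
  (∑ j, |w j| ^ r) ^ (1 / r)

/-- The `i`-th row of the matrix `Φ_k x ∈ ℝ^{p×k}`, whose `j`-th column is `C G_j x`. -/
def PhiRow {n p : ℕ} (C : Matrix (Fin p) (Fin n) ℝ)
    (G : ℕ → Matrix (Fin n) (Fin n) ℝ) (k : ℕ) (x : Fin n → ℝ) (i : Fin p) :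
    Fin k → ℝ :=
  fun j => (C * G (j : ℕ)).mulVec x i

/-- The ℓ₁/ℓ_r central estimator correctly estimates the initial state in `k` time steps
under artifacts in `q` channels: for all `x₀`, all `K` with `|K| = q` and all error
sequences supported in `K`, with outputs `y[j] = C G_j x₀ + e[j]`, every minimizer of
`x ↦ ‖Y_k − Φ_k x‖_{ℓ₁/ℓ_r}` equals `x₀`. -/
def L1LrEstimatorCorrect {n p : ℕ} (C : Matrix (Fin p) (Fin n) ℝ)
    (G : ℕ → Matrix (Fin n) (Fin n) ℝ) (q k : ℕ) (r : ℝ) : Prop :=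
  ∀ (x₀ : Fin n → ℝ) (K : Finset (Fin p)), K.card = q →
    ∀ e : Fin k → (Fin p → ℝ), (∀ j : Fin k, supp (e j) ⊆ K) →
      ∀ xhat : Fin n → ℝ,
        (∀ x : Fin n → ℝ,
          ∑ i, lrNorm r (fun j : Fin k =>
              ((C * G (j : ℕ)).mulVec x₀ + e j) i - PhiRow C G k xhat i j)
            ≤ ∑ i, lrNorm r (fun j : Fin k =>
              ((C * G (j : ℕ)).mulVec x₀ + e j) i - PhiRow C G k x i j)) →
        xhat = x₀

section lrAux
variable {k : ℕ} {r : ℝ}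

lemma lrNorm_nonneg (r : ℝ) (w : Fin k → ℝ) : 0 ≤ lrNorm r w :=
  Real.rpow_nonneg (Finset.sum_nonneg fun _ _ => Real.rpow_nonneg (abs_nonneg _) r) _

lemma lrNorm_neg (r : ℝ) (w : Fin k → ℝ) : lrNorm r (-w) = lrNorm r w := by
  unfold lrNorm; simp

lemma lrNorm_zero (hr : 1 ≤ r) : lrNorm r (0 : Fin k → ℝ) = 0 := by
  have hr0 : r ≠ 0 := by positivity
  simp [lrNorm, Real.zero_rpow hr0, Real.zero_rpow (inv_ne_zero hr0)]

lemma lrNorm_add_le (hr : 1 ≤ r) (w v : Fin k → ℝ) :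
    lrNorm r (w + v) ≤ lrNorm r w + lrNorm r v := by
  simpa [lrNorm] using Real.Lp_add_le Finset.univ w v hr

lemma abs_le_lrNorm (hr : 1 ≤ r) (w : Fin k → ℝ) (j : Fin k) : |w j| ≤ lrNorm r w := by
  have hr0 : r ≠ 0 := by positivity
  have h1 : |w j| ^ r ≤ ∑ j', |w j'| ^ r :=
    Finset.single_le_sum (fun i _ => Real.rpow_nonneg (abs_nonneg _) r) (Finset.mem_univ j)
  calc |w j| = (|w j| ^ r) ^ (1 / r) := by
        rw [one_div, Real.rpow_rpow_inv (abs_nonneg _) hr0]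
    _ ≤ lrNorm r w :=
        Real.rpow_le_rpow (Real.rpow_nonneg (abs_nonneg _) r) h1 (by positivity)

lemma lrNorm_continuous (hr : 1 ≤ r) : Continuous fun w : Fin k → ℝ => lrNorm r w := by
  have h0 : (0 : ℝ) ≤ r := by positivity
  have h1 : Continuous fun w : Fin k → ℝ => ∑ j, |w j| ^ r :=
    continuous_finset_sum _ fun j _ =>
      ((continuous_apply j).abs).rpow_const fun _ => Or.inr h0
  exact h1.rpow_const fun _ => Or.inr (by positivity)

end lrAux

lemma exists_minimizer {n p k : ℕ} {r : ℝ} (hr : 1 ≤ r)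
    (T : (Fin n → ℝ) →ₗ[ℝ] (Fin p → Fin k → ℝ)) (Y : Fin p → Fin k → ℝ) :
    ∃ xhat : Fin n → ℝ, ∀ x : Fin n → ℝ,
      ∑ i, lrNorm r (Y i - T xhat i) ≤ ∑ i, lrNorm r (Y i - T x i) := by
  set V := LinearMap.range T with hV
  set F : (Fin p → Fin k → ℝ) → ℝ := fun M => ∑ i, lrNorm r (Y i - M i) with hF
  have hFc : Continuous F :=
    continuous_finset_sum _ fun i _ =>
      (lrNorm_continuous hr).comp (continuous_const.sub (continuous_apply i))
  have hcoF : ∀ M : Fin p → Fin k → ℝ, ‖Y - M‖ ≤ F M := by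
    intro M
    have hFnn : 0 ≤ F M :=
      Finset.sum_nonneg fun i _ => lrNorm_nonneg r _
    refine (pi_norm_le_iff_of_nonneg hFnn).2 fun i => ?_
    have h1 : ‖(Y - M) i‖ ≤ lrNorm r (Y i - M i) := by
      refine (pi_norm_le_iff_of_nonneg (lrNorm_nonneg r _)).2 fun j => ?_
      simpa [Real.norm_eq_abs] using abs_le_lrNorm hr (Y i - M i) j
    refine h1.trans (Finset.single_le_sum (f := fun i => lrNorm r (Y i - M i))
      (fun i _ => lrNorm_nonneg r _) (Finset.mem_univ i))
  haveI : Nonempty V := ⟨0⟩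
  have hco : Filter.Tendsto (fun v : V => F (v : Fin p → Fin k → ℝ))
      (Filter.cocompact V) Filter.atTop := by
    have h1 : Filter.Tendsto (fun v : V => ‖(v : Fin p → Fin k → ℝ)‖ - ‖Y‖)
        (Filter.cocompact V) Filter.atTop := by
      have h2 : Filter.Tendsto (fun v : V => ‖v‖) (Filter.cocompact V) Filter.atTop :=
        tendsto_norm_cocompact_atTop
      simpa [sub_eq_add_neg] using h2.atTop_add (tendsto_const_nhds (x := -‖Y‖))
    refine Filter.tendsto_atTop_mono (fun v => ?_) h1
    calc ‖(v : Fin p → Fin k → ℝ)‖ - ‖Y‖ ≤ ‖Y - (v : Fin p → Fin k → ℝ)‖ := by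
          rw [norm_sub_rev]; exact norm_sub_norm_le _ _
      _ ≤ F v := hcoF _
  obtain ⟨v₀, hv₀⟩ := (hFc.comp continuous_subtype_val).exists_forall_le hco
  obtain ⟨x₀, hx₀⟩ := v₀.2
  refine ⟨x₀, fun x => ?_⟩
  have := hv₀ ⟨T x, ⟨x, rfl⟩⟩
  simpa [hF, Function.comp, hx₀] using this

/-- `Φ_k` as a linear map into rows. -/
noncomputable def phiL {n p : ℕ} (C : Matrix (Fin p) (Fin n) ℝ)
    (G : ℕ → Matrix (Fin n) (Fin n) ℝ) (k : ℕ) :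
    (Fin n → ℝ) →ₗ[ℝ] (Fin p → Fin k → ℝ) where
  toFun x := fun i j => PhiRow C G k x i j
  map_add' x y := by funext i j; simp [PhiRow, Matrix.mulVec_add]
  map_smul' c x := by funext i j; simp [PhiRow, Matrix.mulVec_smul]

/-- The ℓ₁/ℓ_r central estimator correctly estimates the initial state in
`k` time steps under artifacts in `q` channels if and only if for every `K ⊆ {1,…,p}` with
`|K| = q` and every nonzero `z ∈ ℝ^n`, setting `M = Φ_k z`, one has
`Σ_{i∈K} ‖M_i‖_{ℓ_r} < Σ_{i∈K^c} ‖M_i‖_{ℓ_r}`. -/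
theorem l1lr_estimator_iff_nullspace_property
    (n p q k : ℕ) (hk : 1 ≤ k) (r : ℝ) (hr : 1 ≤ r)
    (C : Matrix (Fin p) (Fin n) ℝ)
    (G : ℕ → Matrix (Fin n) (Fin n) ℝ) :
    L1LrEstimatorCorrect C G q k r
    ↔
    (∀ K : Finset (Fin p), K.card = q →
      ∀ z : Fin n → ℝ, z ≠ 0 →
        ∑ i ∈ K, lrNorm r (PhiRow C G k z i) < ∑ i ∈ Kᶜ, lrNorm r (PhiRow C G k z i)) := by
  classical
  constructor
  · -- correctness ⇒ nullspace property
    intro hcor K hK z hz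
    set g : Fin p → Fin k → ℝ := fun i => PhiRow C G k z i with hg
    set e : Fin k → Fin p → ℝ := fun j i => if i ∈ K then -(g i j) else 0 with he'
    have he : ∀ j : Fin k, supp (e j) ⊆ K := by
      intro j i hi
      simp only [supp, Finset.mem_filter] at hi
      by_contra hiK
      exact hi.2 (by simp [he', hiK])
    set Y : Fin p → Fin k → ℝ := fun i j => ((C * G (j : ℕ)).mulVec z + e j) i with hY
    obtain ⟨xhat, hxhat⟩ := exists_minimizer hr (phiL C G k) Y
    have hrow : ∀ (w : Fin n → ℝ) (i : Fin p),
        (fun j : Fin k => ((C * G (j : ℕ)).mulVec z + e j) i - PhiRow C G k w i j)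
          = Y i - phiL C G k w i := by
      intro w i; funext j; simp [hY, phiL, PhiRow]
    have hzhat : xhat = z := by
      apply hcor z K hK e he xhat
      intro x
      simp only [hrow]
      exact hxhat x
    -- value at z
    have hrz : ∀ i, Y i - phiL C G k z i = (fun j => e j i) := by
      intro i; funext j; simp [hY, phiL, PhiRow]
    have hval_z : ∑ i, lrNorm r (Y i - phiL C G k z i) = ∑ i ∈ K, lrNorm r (g i) := by
      rw [← Finset.sum_add_sum_compl K fun i => lrNorm r (Y i - phiL C G k z i)]
      have h1 : ∑ i ∈ K, lrNorm r (Y i - phiL C G k z i) = ∑ i ∈ K, lrNorm r (g i) := by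
        refine Finset.sum_congr rfl fun i hi => ?_
        rw [hrz i]
        have : (fun j => e j i) = -(g i) := by funext j; simp [he', hi]
        rw [this, lrNorm_neg]
      have h2 : ∑ i ∈ Kᶜ, lrNorm r (Y i - phiL C G k z i) = 0 := by
        refine Finset.sum_eq_zero fun i hi => ?_
        rw [hrz i]
        have : (fun j => e j i) = (0 : Fin k → ℝ) := by
          funext j; simp [he', Finset.mem_compl.mp hi]
        rw [this, lrNorm_zero hr]
      rw [h1, h2, add_zero]
    -- value at 0
    have hr0 : ∀ i, Y i - phiL C G k (0 : Fin n → ℝ) i = Y i := by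
      intro i
      rw [map_zero (phiL C G k)]
      simp
    have hYval : ∀ i, Y i = (if i ∈ K then 0 else g i) := by
      intro i
      by_cases hi : i ∈ K
      · funext j; simp [hY, he', hi, hg, PhiRow]
      · funext j; simp [hY, he', hi, hg, PhiRow]
    have hval_0 : ∑ i, lrNorm r (Y i - phiL C G k (0 : Fin n → ℝ) i)
        = ∑ i ∈ Kᶜ, lrNorm r (g i) := by
      rw [← Finset.sum_add_sum_compl K fun i => lrNorm r (Y i - phiL C G k (0 : Fin n → ℝ) i)]
      have h1 : ∑ i ∈ K, lrNorm r (Y i - phiL C G k (0 : Fin n → ℝ) i) = 0 := by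
        refine Finset.sum_eq_zero fun i hi => ?_
        rw [hr0 i, hYval i, if_pos hi, lrNorm_zero hr]
      have h2 : ∑ i ∈ Kᶜ, lrNorm r (Y i - phiL C G k (0 : Fin n → ℝ) i)
          = ∑ i ∈ Kᶜ, lrNorm r (g i) := by
        refine Finset.sum_congr rfl fun i hi => ?_
        rw [hr0 i, hYval i, if_neg (Finset.mem_compl.mp hi)]
      rw [h1, h2, zero_add]
    rw [hzhat] at hxhat
    have hle : ∑ i ∈ K, lrNorm r (g i) ≤ ∑ i ∈ Kᶜ, lrNorm r (g i) := by
      have := hxhat 0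
      rwa [hval_z, hval_0] at this
    refine lt_of_le_of_ne hle ?_
    intro heq
    have h0 : (0 : Fin n → ℝ) = z := by
      apply hcor z K hK e he 0
      intro x
      simp only [hrow]
      rw [hval_0, ← heq, ← hval_z]
      exact hxhat x
    exact hz h0.symm
  · -- nullspace property ⇒ correctness
    intro NSP x₀ K hK e he xhat hmin
    by_contra hne
    have hz : xhat - x₀ ≠ 0 := sub_ne_zero.mpr hne
    set z : Fin n → ℝ := xhat - x₀ with hzdef
    set E : Fin p → Fin k → ℝ := fun i j => e j i with hE
    have key : ∑ i, lrNorm r (E i - PhiRow C G k z i) ≤ ∑ i, lrNorm r (E i) := by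
      have hmin0 := hmin x₀
      have hL : ∀ i : Fin p,
          (fun j : Fin k => ((C * G (j : ℕ)).mulVec x₀ + e j) i - PhiRow C G k xhat i j)
            = E i - PhiRow C G k z i := by
        intro i; funext j
        simp only [Pi.sub_apply, Pi.add_apply, hE, PhiRow, hzdef, Matrix.mulVec_sub]
        ring
      have hR : ∀ i : Fin p,
          (fun j : Fin k => ((C * G (j : ℕ)).mulVec x₀ + e j) i - PhiRow C G k x₀ i j)
            = E i := by
        intro i; funext j; simp [hE, PhiRow]
      simpa only [hL, hR] using hmin0
    have hE0 : ∀ i ∈ Kᶜ, E i = 0 := by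
      intro i hi
      funext j
      by_contra h0
      exact Finset.mem_compl.mp hi
        (he j (Finset.mem_filter.mpr ⟨Finset.mem_univ i, h0⟩))
    rw [← Finset.sum_add_sum_compl K fun i => lrNorm r (E i - PhiRow C G k z i),
        ← Finset.sum_add_sum_compl K fun i => lrNorm r (E i)] at key
    have hKc1 : ∑ i ∈ Kᶜ, lrNorm r (E i - PhiRow C G k z i)
        = ∑ i ∈ Kᶜ, lrNorm r (PhiRow C G k z i) := by
      refine Finset.sum_congr rfl fun i hi => ?_
      rw [hE0 i hi, zero_sub, lrNorm_neg]
    have hKc2 : ∑ i ∈ Kᶜ, lrNorm r (E i) = 0 := by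
      refine Finset.sum_eq_zero fun i hi => ?_
      rw [hE0 i hi, lrNorm_zero hr]
    rw [hKc1, hKc2, add_zero] at key
    have htri : ∑ i ∈ K, lrNorm r (E i)
        ≤ ∑ i ∈ K, lrNorm r (E i - PhiRow C G k z i)
          + ∑ i ∈ K, lrNorm r (PhiRow C G k z i) := by
      rw [← Finset.sum_add_distrib]
      refine Finset.sum_le_sum fun i _ => ?_
      have h := lrNorm_add_le hr (E i - PhiRow C G k z i) (PhiRow C G k z i)
      rwa [sub_add_cancel] at h
    have hNSP := NSP K hK z hz
    linarith
end

section
/- Let n, p, q, k ∈ ℕ with k ≥ 1 and q < p, let C ∈ ℝ^{p×n}, and let (G_j)_{j∈ℕ} be a sequence of matrices in ℝ^{n×n}. For each i ∈ {1,…,p}, define Φ_{k,i} : ℝ^n → ℝ^k by (Φ_{k,i} z)_j = (C G_j z)_i. Suppose there exist real numbers α > 0 and β > 0 such that α ‖z‖₂ ≤ ‖Φ_{k,i} z‖₂ ≤ β ‖z‖₂ for every i and every z ∈ ℝ^n, and suppose qβ < (p − q)α. Then the ℓ₁/ℓ₂ central estimator correctly estimates the initial state in k time steps under artifacts in q channels: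 for every x_0 ∈ ℝ^n, every K ⊆ {1,…,p} with |K| = q, and every sequence e[0],…,e[k−1] ∈ ℝ^p with supp(e[j]) ⊆ K for all j, setting y[j] = C G_j x_0 + e[j], every minimizer x̂ ∈ ℝ^n of x ↦ ‖Y_k − Φ_k x‖_{ℓ₁/ℓ₂} satisfies x̂ = x_0. -/
/-- The Euclidean norm of a vector `w ∈ ℝ^m`. -/
noncomputable def l2Norm {m : ℕ} (w : Fin m → ℝ) : ℝ :=
  Real.sqrt (∑ j, w j ^ 2)

lemma l2Norm_eq_norm {m : ℕ} (w : Fin m → ℝ) :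
    l2Norm w = ‖(WithLp.equiv 2 (Fin m → ℝ)).symm w‖ := by
  rw [EuclideanSpace.norm_eq]
  simp [l2Norm, Real.norm_eq_abs, sq_abs]

lemma l2Norm_nonneg' {m : ℕ} (w : Fin m → ℝ) : 0 ≤ l2Norm w := Real.sqrt_nonneg _

lemma l2Norm_zero' {m : ℕ} : l2Norm (0 : Fin m → ℝ) = 0 := by
  simp [l2Norm]

lemma l2Norm_eq_zero' {m : ℕ} {w : Fin m → ℝ} (h : l2Norm w = 0) : w = 0 := by
  rw [l2Norm_eq_norm, norm_eq_zero] at h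
  simpa using congrArg (WithLp.equiv 2 (Fin m → ℝ)) h

lemma l2Norm_lower' {m : ℕ} (a b : Fin m → ℝ) :
    l2Norm a - l2Norm b ≤ l2Norm (fun j => a j + b j) := by
  rw [l2Norm_eq_norm, l2Norm_eq_norm, l2Norm_eq_norm]
  have h : (WithLp.equiv 2 (Fin m → ℝ)).symm (fun j => a j + b j)
      = (WithLp.equiv 2 (Fin m → ℝ)).symm a + (WithLp.equiv 2 (Fin m → ℝ)).symm b := rfl
  rw [h]
  have h2 := norm_sub_le ((WithLp.equiv 2 (Fin m → ℝ)).symm a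
      + (WithLp.equiv 2 (Fin m → ℝ)).symm b) ((WithLp.equiv 2 (Fin m → ℝ)).symm b)
  have h3 : ((WithLp.equiv 2 (Fin m → ℝ)).symm a + (WithLp.equiv 2 (Fin m → ℝ)).symm b)
      - (WithLp.equiv 2 (Fin m → ℝ)).symm b = (WithLp.equiv 2 (Fin m → ℝ)).symm a := by abel
  rw [h3] at h2
  linarith

/-- If `α ‖z‖₂ ≤ ‖Φ_{k,i} z‖₂ ≤ β ‖z‖₂` for all channels `i` and all `z`,
with `α, β > 0` and `qβ < (p − q)α`, then the ℓ₁/ℓ₂ central estimator correctly estimates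
the initial state in `k` time steps under artifacts in `q` channels: for every `x₀`, every
`K` with `|K| = q`, and every error sequence supported in `K`, with outputs
`y[j] = C G_j x₀ + e[j]`, every minimizer of `x ↦ ‖Y_k − Φ_k x‖_{ℓ₁/ℓ₂}` equals `x₀`. -/
theorem singular_value_implies_l1l2_estimation
    (n p q k : ℕ) (hk : 1 ≤ k) (hqp : q < p)
    (C : Matrix (Fin p) (Fin n) ℝ)
    (G : ℕ → Matrix (Fin n) (Fin n) ℝ)
    (α β : ℝ) (hα : 0 < α) (hβ : 0 < β)
    (hbounds : ∀ (i : Fin p) (z : Fin n → ℝ),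
      α * l2Norm z ≤ l2Norm (PhiRow C G k z i) ∧ l2Norm (PhiRow C G k z i) ≤ β * l2Norm z)
    (hqαβ : (q : ℝ) * β < ((p : ℝ) - (q : ℝ)) * α) :
    ∀ (x₀ : Fin n → ℝ) (K : Finset (Fin p)), K.card = q →
      ∀ e : Fin k → (Fin p → ℝ), (∀ j : Fin k, supp (e j) ⊆ K) →
        ∀ xhat : Fin n → ℝ,
          (∀ x : Fin n → ℝ,
            ∑ i, l2Norm (fun j : Fin k =>
                ((C * G (j : ℕ)).mulVec x₀ + e j) i - PhiRow C G k xhat i j)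
              ≤ ∑ i, l2Norm (fun j : Fin k =>
                ((C * G (j : ℕ)).mulVec x₀ + e j) i - PhiRow C G k x i j)) →
          xhat = x₀ := by
  intro x₀ K hK e he xhat hmin
  set z : Fin n → ℝ := x₀ - xhat with hz
  set ε : Fin p → (Fin k → ℝ) := fun i j => e j i with hε
  set L : ℝ := l2Norm z with hL
  have hterm : ∀ i : Fin p,
      (fun j : Fin k => ((C * G (j : ℕ)).mulVec x₀ + e j) i - PhiRow C G k xhat i j)
        = fun j => ε i j + PhiRow C G k z i j := by
    intro i; funext j
    simp only [PhiRow, hz, Pi.add_apply, Matrix.mulVec_sub, Pi.sub_apply, hε]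
    ring
  have hterm0 : ∀ i : Fin p,
      (fun j : Fin k => ((C * G (j : ℕ)).mulVec x₀ + e j) i - PhiRow C G k x₀ i j)
        = ε i := by
    intro i; funext j
    simp [PhiRow, hε]
  have key := hmin x₀
  simp only [hterm, hterm0] at key
  have hε0 : ∀ i : Fin p, i ∉ K → ε i = 0 := by
    intro i hi
    funext j
    by_contra h
    exact hi (he j (by simp [supp, hε] at h ⊢; exact h))
  have hlow : ∀ i : Fin p,
      (if i ∈ K then l2Norm (ε i) - β * L else α * L)
        ≤ l2Norm (fun j => ε i j + PhiRow C G k z i j) := by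
    intro i
    by_cases hi : i ∈ K
    · simp only [hi, if_true]
      have h1 := l2Norm_lower' (ε i) (PhiRow C G k z i)
      have h2 := (hbounds i z).2
      rw [hL]
      linarith
    · simp only [hi, if_false]
      have heq : (fun j => ε i j + PhiRow C G k z i j) = PhiRow C G k z i := by
        funext j; rw [hε0 i hi]; simp
      rw [heq]
      exact (hbounds i z).1
  have hsumlow : ∑ i, (if i ∈ K then l2Norm (ε i) - β * L else α * L)
      ≤ ∑ i, l2Norm (fun j => ε i j + PhiRow C G k z i j) :=
    Finset.sum_le_sum fun i _ => hlow i
  have hcard : (Kᶜ : Finset (Fin p)).card = p - q := by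
    rw [Finset.card_compl, hK]; simp
  have hsplit : ∑ i, (if i ∈ K then l2Norm (ε i) - β * L else α * L)
      = (∑ i ∈ K, l2Norm (ε i)) - (q : ℝ) * (β * L)
        + ((p : ℝ) - (q : ℝ)) * (α * L) := by
    rw [Finset.sum_ite]
    have h1 : Finset.univ.filter (fun i => i ∈ K) = K := by
      ext i; simp
    have h2 : Finset.univ.filter (fun i => i ∉ K) = Kᶜ := by
      ext i; simp
    rw [h1, h2, Finset.sum_sub_distrib, Finset.sum_const, Finset.sum_const, hK, hcard]
    have hcast : ((p - q : ℕ) : ℝ) = (p : ℝ) - (q : ℝ) := by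
      rw [Nat.cast_sub hqp.le]
    rw [nsmul_eq_mul, nsmul_eq_mul, hcast]
  have hrhs : ∑ i, l2Norm (ε i) = ∑ i ∈ K, l2Norm (ε i) := by
    symm
    apply Finset.sum_subset (Finset.subset_univ K)
    intro i _ hi
    rw [hε0 i hi, l2Norm_zero']
  rw [hrhs] at key
  rw [hsplit] at hsumlow
  have hL0 : 0 ≤ L := l2Norm_nonneg' z
  have hLle : ((p : ℝ) - (q : ℝ)) * α * L ≤ (q : ℝ) * β * L := by nlinarith
  have hLzero : L = 0 := by nlinarith
  have hzzero : z = 0 := l2Norm_eq_zero' hLzero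
  have := sub_eq_zero.mp hzzero
  exact this.symm
end
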